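/- arXiv:2010.16089 — 3 statements merged into one kernel-verified Lean document; each statement's English description precedes it below -/
import Mathlib

section
/- For every type-C partition d of size 2n (n ≥ 0), the D-collapse of the transpose d^t is a special type-D partition of size 2n (i.e. it is of type D and its transpose is of type C). In particular the metaplectic Lusztig–Spaltenstein map d ↦ d̃_LS(d) := D-collapse of d^t is a well-defined map from the set of type-C partitions of size 2n to the set of special type-D partitions of size 2n. -/
/-!
Partitions (Young diagrams) are represented as antitone, eventually-zero
functions `f : ℕ → ℕ`, where `f i` is the length of the `(i+1)`-st row.
-/

/-- `f : ℕ → ℕ` represents a partition (Young diagram). -/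
def IsPartition (f : ℕ → ℕ) : Prop :=
  Antitone f ∧ ∃ N, ∀ i, N ≤ i → f i = 0

/-- The size of a partition: the sum of its parts. -/
noncomputable def size (f : ℕ → ℕ) : ℕ := ∑' i, f i

/-- The sum of the `k` largest parts of a partition. -/
def psum (f : ℕ → ℕ) (k : ℕ) : ℕ := ∑ i ∈ Finset.range k, f i

/-- The multiplicity with which `p` occurs as a part. -/
noncomputable def mult (f : ℕ → ℕ) (p : ℕ) : ℕ := {i | f i = p}.ncard

/-- The transpose (conjugate) partition: `transpose f i` is the length of the
`(i+1)`-st column of `f`. -/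
noncomputable def transpose (f : ℕ → ℕ) : ℕ → ℕ := fun i => {j | i < f j}.ncard

/-- The number of parts of a partition (the length of its first column). -/
noncomputable def numParts (f : ℕ → ℕ) : ℕ := {j | 0 < f j}.ncard

/-- Type B: odd size, and every (positive) even part occurs with even multiplicity. -/
def IsTypeB (f : ℕ → ℕ) : Prop :=
  IsPartition f ∧ Odd (size f) ∧ ∀ p, 0 < p → Even p → Even (mult f p)

/-- Type C: even size, and every odd part occurs with even multiplicity. -/
def IsTypeC (f : ℕ → ℕ) : Prop :=
  IsPartition f ∧ Even (size f) ∧ ∀ p, Odd p → Even (mult f p)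

/-- Type D: even size, and every (positive) even part occurs with even multiplicity. -/
def IsTypeD (f : ℕ → ℕ) : Prop :=
  IsPartition f ∧ Even (size f) ∧ ∀ p, 0 < p → Even p → Even (mult f p)

/-- Dominance order `f ≼ g` between partitions of the same size. -/
def Dom (f g : ℕ → ℕ) : Prop :=
  size f = size g ∧ ∀ k, psum f k ≤ psum g k

/-- `c` is the X-collapse of `d`, where predicate `T` expresses "type X": `c` is
the greatest type-X partition of the same size dominated by `d`. -/
def IsCollapse (T : (ℕ → ℕ) → Prop) (d c : ℕ → ℕ) : Prop :=
  T c ∧ Dom c d ∧ ∀ e, T e → Dom e d → Dom e c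

open Classical in
/-- The X-collapse of `d` (junk value if it does not exist). -/
noncomputable def collapse (T : (ℕ → ℕ) → Prop) (d : ℕ → ℕ) : ℕ → ℕ :=
  if h : ∃ c, IsCollapse T d c then h.choose else fun _ => 0

/-- The B-collapse. -/
noncomputable def collapseB : (ℕ → ℕ) → ℕ → ℕ := collapse IsTypeB

/-- The C-collapse. -/
noncomputable def collapseC : (ℕ → ℕ) → ℕ → ℕ := collapse IsTypeC

/-- The D-collapse. -/
noncomputable def collapseD : (ℕ → ℕ) → ℕ → ℕ := collapse IsTypeD

/-- `d⁺`: add one box to the first row. -/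
def boxPlus (f : ℕ → ℕ) : ℕ → ℕ := fun i => if i = 0 then f 0 + 1 else f i

/-- `d⁻`: remove one box from the last row (for nonempty `d`). -/
noncomputable def boxMinus (f : ℕ → ℕ) : ℕ → ℕ :=
  fun i => if i = numParts f - 1 then f i - 1 else f i

/-- `∇(d)`: remove the first column (every part decreased by 1). -/
def delCol (f : ℕ → ℕ) : ℕ → ℕ := fun i => f i - 1

/-- `∇̌(d)`: remove the first row (delete one largest part). -/
def delRow (f : ℕ → ℕ) : ℕ → ℕ := fun i => f (i + 1)

/-- The metaplectic Lusztig–Spaltenstein map: the D-collapse of the transpose. -/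
noncomputable def mLS (d : ℕ → ℕ) : ℕ → ℕ := collapseD (transpose d)

/-- The map `d̃_SP`: the C-collapse of `(e⁺)⁻`. -/
noncomputable def mSP (e : ℕ → ℕ) : ℕ → ℕ := collapseC (boxMinus (boxPlus e))

/-- The metaplectic Barbasch–Vogan duality. -/
noncomputable def mBV (d : ℕ → ℕ) : ℕ → ℕ := mSP (mLS d)

namespace Stmt0


lemma mem_iff_lt_ncard (S : Set ℕ) (h : S.Finite) (hdc : ∀ a b : ℕ, a ≤ b → b ∈ S → a ∈ S) (i : ℕ) :
    i ∈ S ↔ i < S.ncard := by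
  classical
  have hF : S = ↑h.toFinset := by simp
  rcases Finset.eq_empty_or_nonempty h.toFinset with he | hne
  · rw [hF, he]; simp
  · set m := h.toFinset.max' hne with hm
    have hFm : h.toFinset = Finset.range (m+1) := by
      apply Finset.ext; intro a
      simp only [Finset.mem_range, Nat.lt_succ_iff]
      constructor
      · exact fun ha => Finset.le_max' _ _ ha
      · intro ha
        have : m ∈ S := by simpa using h.toFinset.max'_mem hne
        simpa using hdc a m ha this
    rw [hF, hFm]
    rw [Set.ncard_coe_finset, Finset.card_range, Finset.coe_range, Set.mem_Iio]

variable {f : ℕ → ℕ}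

lemma psum_succ (f : ℕ → ℕ) (k : ℕ) : psum f (k+1) = psum f k + f k :=
  Finset.sum_range_succ f k

lemma psum_mono (f : ℕ → ℕ) : Monotone (psum f) := by
  intro a b hab
  exact Finset.sum_le_sum_of_subset (Finset.range_subset_range.2 hab)

lemma setOf_finite (hf : IsPartition f) (v : ℕ) : {j | v < f j}.Finite := by
  obtain ⟨N, hN⟩ := hf.2
  apply Set.Finite.subset (Set.finite_Iio N)
  intro j hj
  simp only [Set.mem_setOf_eq] at hj
  by_contra h
  simp only [Set.mem_Iio, not_lt] at h
  have := hN j h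
  omega

lemma key (hf : IsPartition f) (i v : ℕ) : i < transpose f v ↔ v < f i := by
  have hfin := setOf_finite hf v
  have hdc : ∀ a b : ℕ, a ≤ b → b ∈ {j | v < f j} → a ∈ {j | v < f j} := by
    intro a b hab hb
    exact lt_of_lt_of_le hb (hf.1 hab)
  rw [transpose]
  rw [← mem_iff_lt_ncard _ hfin hdc i]
  rfl

lemma transpose_zero (hf : IsPartition f) (v : ℕ) (hv : f 0 ≤ v) : transpose f v = 0 := by
  rw [transpose]
  convert Set.ncard_empty ℕ
  apply Set.eq_empty_iff_forall_notMem.2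
  intro j hj
  simp only [Set.mem_setOf_eq] at hj
  have := hf.1 (Nat.zero_le j)
  omega

lemma transpose_isPartition (hf : IsPartition f) : IsPartition (transpose f) := by
  constructor
  · intro a b hab
    apply Set.ncard_le_ncard _ (setOf_finite hf a)
    intro j hj
    simp only [Set.mem_setOf_eq] at *
    omega
  · exact ⟨f 0, fun v hv => transpose_zero hf v hv⟩

lemma transpose_transpose (hf : IsPartition f) : transpose (transpose f) = f := by
  funext i
  have : {v | i < transpose f v} = Set.Iio (f i) := by
    ext v
    simp only [Set.mem_setOf_eq, Set.mem_Iio]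
    exact key hf i v
  rw [transpose]
  simp only [this]
  rw [← Finset.coe_range, Set.ncard_coe_finset, Finset.card_range]

lemma size_eq_psum (N : ℕ) (h : ∀ i, N ≤ i → f i = 0) : size f = psum f N :=
  tsum_eq_sum (fun b hb => h b (by simpa using hb))

lemma psum_le_size (hf : IsPartition f) (k : ℕ) : psum f k ≤ size f := by
  obtain ⟨N, hN⟩ := hf.2
  rw [size_eq_psum (max N k) (fun i hi => hN i (le_trans (le_max_left _ _) hi))]
  exact psum_mono f (le_max_right _ _)

lemma psum_eq_size (hf : IsPartition f) (N : ℕ) (h : ∀ i, N ≤ i → f i = 0) (k : ℕ) (hk : N ≤ k) :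
    psum f k = size f := by
  rw [size_eq_psum N h]
  rw [psum, psum, ← Finset.sum_range_add_sum_Ico _ hk]
  have : ∑ i ∈ Finset.Ico N k, f i = 0 := by
    apply Finset.sum_eq_zero
    intro i hi
    exact h i (Finset.mem_Ico.1 hi).1
  omega

-- transpose as a filter card
lemma transpose_eq_card (hf : IsPartition f) (N : ℕ) (h : ∀ i, N ≤ i → f i = 0) (v : ℕ) :
    transpose f v = ((Finset.range N).filter (fun j => v < f j)).card := by
  rw [transpose]
  have : {j | v < f j} = ↑((Finset.range N).filter (fun j => v < f j)) := by
    ext j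
    simp only [Set.mem_setOf_eq, Finset.coe_filter, Finset.mem_range, Set.mem_setOf_eq]
    constructor
    · intro hj
      refine ⟨?_, hj⟩
      by_contra hc
      push_neg at hc
      have := h j hc
      omega
    · exact fun hj => hj.2
  rw [this, Set.ncard_coe_finset]

lemma psum_transpose_eq (hf : IsPartition f) (N : ℕ) (h : ∀ i, N ≤ i → f i = 0) (w : ℕ) :
    psum (transpose f) w = ∑ j ∈ Finset.range N, min (f j) w := by
  rw [psum]
  have : ∀ v ∈ Finset.range w, transpose f v = ∑ j ∈ Finset.range N, (if v < f j then 1 else 0) := by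
    intro v _
    rw [transpose_eq_card hf N h v, Finset.card_filter]
  rw [Finset.sum_congr rfl this, Finset.sum_comm]
  apply Finset.sum_congr rfl
  intro j _
  rw [← Finset.card_filter]
  have : (Finset.range w).filter (fun v => v < f j) = Finset.range (min (f j) w) := by
    ext v
    simp only [Finset.mem_filter, Finset.mem_range, lt_min_iff]
    omega
  rw [this, Finset.card_range]

lemma size_transpose (hf : IsPartition f) : size (transpose f) = size f := by
  obtain ⟨N, hN⟩ := hf.2
  have ht := transpose_isPartition hf
  obtain ⟨M, hM⟩ := ht.2
  rw [size_eq_psum N hN]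
  have h1 : psum (transpose f) (max M (f 0)) = size (transpose f) :=
    psum_eq_size ht M hM _ (le_max_left _ _)
  rw [← h1, psum_transpose_eq hf N hN]
  apply Finset.sum_congr rfl
  intro j hj
  have : f j ≤ f 0 := hf.1 (Nat.zero_le j)
  omega

/-- `A f w N = Σ_{j<N} (f j ∸ w)`. -/
def A (f : ℕ → ℕ) (w N : ℕ) : ℕ := ∑ j ∈ Finset.range N, (f j - w)

lemma size_eq_psumT_add_A (hf : IsPartition f) (N : ℕ) (h : ∀ i, N ≤ i → f i = 0) (w : ℕ) :
    size f = psum (transpose f) w + A f w N := by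
  rw [psum_transpose_eq hf N h w, size_eq_psum N h, A, psum, ← Finset.sum_add_distrib]
  apply Finset.sum_congr rfl
  intro j _
  omega

lemma psum_le_A_add (hf : IsPartition f) (N : ℕ) (h : ∀ i, N ≤ i → f i = 0) (w k : ℕ) :
    psum f k ≤ A f w N + k * w := by
  have h1 : psum f k ≤ psum f (max N k) := psum_mono f (le_max_right _ _)
  have h2 : A f w (max N k) = A f w N := by
    rw [A, A, ← Finset.sum_range_add_sum_Ico _ (le_max_left N k)]
    have : ∑ j ∈ Finset.Ico N (max N k), (f j - w) = 0 := by
      apply Finset.sum_eq_zero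
      intro i hi
      have := h i (Finset.mem_Ico.1 hi).1
      omega
    omega
  have h3 : ∑ j ∈ Finset.range k, (f j - w) ≤ A f w (max N k) := by
    apply Finset.sum_le_sum_of_subset (Finset.range_subset_range.2 (le_max_right _ _))
  have h4 : psum f k ≤ ∑ j ∈ Finset.range k, (f j - w) + k * w := by
    rw [psum]
    calc ∑ j ∈ Finset.range k, f j ≤ ∑ j ∈ Finset.range k, ((f j - w) + w) := by
          apply Finset.sum_le_sum; intro j _; omega
      _ = ∑ j ∈ Finset.range k, (f j - w) + k * w := by
          rw [Finset.sum_add_distrib]; simp [Finset.sum_const, Finset.card_range, mul_comm]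
  omega

lemma A_attained (hf : IsPartition f) (N : ℕ) (h : ∀ i, N ≤ i → f i = 0) (w : ℕ) :
    A f w N + (transpose f w) * w = psum f (transpose f w) := by
  set k₀ := transpose f w with hk₀
  have hkey : ∀ j, j < k₀ ↔ w < f j := fun j => key hf j w
  have hk₀N : k₀ ≤ N := by
    by_contra hc
    push_neg at hc
    have : w < f N := (hkey N).1 hc
    have := h N le_rfl
    omega
  rw [A, ← Finset.sum_range_add_sum_Ico _ hk₀N]
  have hz : ∑ j ∈ Finset.Ico k₀ N, (f j - w) = 0 := by
    apply Finset.sum_eq_zero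
    intro j hj
    have : ¬ (w < f j) := fun hc => by
      have := (hkey j).2 hc
      have := (Finset.mem_Ico.1 hj).1
      omega
    omega
  rw [hz, add_zero, psum]
  have : ∀ j ∈ Finset.range k₀, f j - w + w = f j := by
    intro j hj
    have : w < f j := (hkey j).1 (Finset.mem_range.1 hj)
    omega
  calc (∑ j ∈ Finset.range k₀, (f j - w)) + k₀ * w
      = ∑ j ∈ Finset.range k₀, ((f j - w) + w) := by
        rw [Finset.sum_add_distrib]; simp [Finset.sum_const, Finset.card_range, mul_comm]
    _ = ∑ j ∈ Finset.range k₀, f j := Finset.sum_congr rfl this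

/-- Dominance transposition. -/
lemma domT {e t : ℕ → ℕ} (he : IsPartition e) (ht : IsPartition t)
    (hsize : size e = size t) (hle : ∀ k, psum e k ≤ psum t k) (w : ℕ) :
    psum (transpose t) w ≤ psum (transpose e) w := by
  obtain ⟨Ne, hNe⟩ := he.2
  obtain ⟨Nt, hNt⟩ := ht.2
  have hA : A e w Ne ≤ A t w Nt := by
    have h1 := A_attained he Ne hNe w
    have h2 := hle (transpose e w)
    have h3 := psum_le_A_add ht Nt hNt w (transpose e w)
    omega
  have he1 := size_eq_psumT_add_A he Ne hNe w
  have ht1 := size_eq_psumT_add_A ht Nt hNt w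
  omega

/-- mult via transpose columns. -/
lemma mult_add_transpose (hf : IsPartition f) (p : ℕ) (hp : 0 < p) :
    mult f p + transpose f p = transpose f (p-1) := by
  have h1 : {i | f i = p} ∪ {i | p < f i} = {i | p - 1 < f i} := by
    ext i; simp only [Set.mem_union, Set.mem_setOf_eq]; omega
  have hd : Disjoint {i | f i = p} {i | p < f i} := by
    rw [Set.disjoint_left]; intro i hi1 hi2
    simp only [Set.mem_setOf_eq] at *
    omega
  have hfin1 : {i | f i = p}.Finite := by
    apply Set.Finite.subset (setOf_finite hf (p-1))
    intro i hi; simp only [Set.mem_setOf_eq] at *; omega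
  have hfin2 := setOf_finite hf p
  rw [mult, transpose, transpose, ← h1, Set.ncard_union_eq hd hfin1 hfin2]

lemma transpose_antitone (hf : IsPartition f) : Antitone (transpose f) := by
  intro a b hab
  apply Set.ncard_le_ncard _ (setOf_finite hf a)
  intro j hj
  simp only [Set.mem_setOf_eq] at *
  omega

variable {d e : ℕ → ℕ}

/-- pair parity of the transpose of a type-C partition -/
lemma pair_parity (hd : IsTypeC d) (j : ℕ) :
    Even (transpose d (2*j) + transpose d (2*j+1)) := by
  have h1 := mult_add_transpose hd.1 (2*j+1) (by omega)
  have h2 : Even (mult d (2*j+1)) := hd.2.2 _ ⟨j, by ring⟩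
  obtain ⟨m, hm⟩ := h2
  have : 2*j+1-1 = 2*j := by omega
  rw [this] at h1
  exact ⟨m + transpose d (2*j+1), by omega⟩

/-- first-k-rows at a corner of a type-C partition have even total size -/
lemma corner_even (hd : IsTypeC d) (k : ℕ) (hc : k = 0 ∨ d k < d (k-1)) :
    Even (psum d k) := by
  rcases hc with rfl | hc
  · simp [psum]
  classical
  set V := (Finset.range k).image d with hV
  have hmaps : ∀ i ∈ Finset.range k, d i ∈ V := fun i hi => Finset.mem_image_of_mem d hi
  have hsum := Finset.sum_fiberwise_of_maps_to hmaps d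
  rw [psum, ← hsum]
  apply Finset.even_sum
  intro p hp
  obtain ⟨i₀, hi₀, hdi₀⟩ := Finset.mem_image.1 hp
  rw [Finset.mem_range] at hi₀
  have hk1 : k - 1 < k := by omega
  have hpd : d k < p := by
    have : d (k-1) ≤ d i₀ := hd.1.1 (by omega)
    omega
  have hfiber : ∀ i, d i = p ↔ i ∈ (Finset.range k).filter (fun i => d i = p) := by
    intro i
    simp only [Finset.mem_filter, Finset.mem_range]
    constructor
    · intro h
      refine ⟨?_, h⟩
      by_contra hik
      push_neg at hik
      have : d i ≤ d k := hd.1.1 hik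
      omega
    · exact fun h => h.2
  have hmult : mult d p = ((Finset.range k).filter (fun i => d i = p)).card := by
    rw [mult]
    have : {i | d i = p} = ↑((Finset.range k).filter (fun i => d i = p)) := by
      ext i; simpa using hfiber i
    rw [this, Set.ncard_coe_finset]
  have hsump : ∑ i ∈ (Finset.range k).filter (fun i => d i = p), d i
      = ((Finset.range k).filter (fun i => d i = p)).card * p := by
    rw [Finset.sum_congr rfl (fun i hi => (Finset.mem_filter.1 hi).2), Finset.sum_const,
      smul_eq_mul]
  rw [hsump]
  rcases Nat.even_or_odd p with hpe | hpo
  · exact hpe.mul_left _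
  · have : Even (mult d p) := hd.2.2 p hpo
    rw [hmult] at this
    exact this.mul_right _

/-- the transpose of a type-D partition has even partial sums at odd indices -/
lemma typeD_psumT_odd_even (he : IsTypeD e) (k : ℕ) :
    Even (psum (transpose e) (2*k+1)) := by
  have hTp := transpose_isPartition he.1
  obtain ⟨K, hK⟩ := hTp.2
  have hstep : ∀ k, Even (transpose e (2*k+1) + transpose e (2*k+2)) := by
    intro k
    have h1 := mult_add_transpose he.1 (2*k+2) (by omega)
    have h2 : Even (mult e (2*k+2)) := he.2.2 _ (by omega) ⟨k+1, by ring⟩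
    obtain ⟨m, hm⟩ := h2
    have h3 : 2*k+2-1 = 2*k+1 := by omega
    rw [h3] at h1
    exact ⟨m + transpose e (2*k+2), by omega⟩
  have hpar : ∀ k, Even (psum (transpose e) (2*(k+1)+1)) → Even (psum (transpose e) (2*k+1)) := by
    intro k h
    have e1 : psum (transpose e) (2*(k+1)+1) = psum (transpose e) (2*k+1) + (transpose e (2*k+1) + transpose e (2*k+2)) := by
      have := psum_succ (transpose e) (2*k+1)
      have := psum_succ (transpose e) (2*k+2)
      have h2 : 2*(k+1)+1 = 2*k+2+1 := by ring
      rw [h2, psum_succ (transpose e) (2*k+2), show 2*k+2 = (2*k+1)+1 from rfl, psum_succ (transpose e) (2*k+1)]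
      ring
    obtain ⟨m, hm⟩ := hstep k
    obtain ⟨s, hs⟩ := h
    exact ⟨s - m, by omega⟩
  have hiter : ∀ m k, Even (psum (transpose e) (2*(k+m)+1)) → Even (psum (transpose e) (2*k+1)) := by
    intro m
    induction m with
    | zero => intro k h; simpa using h
    | succ m ih =>
      intro k h
      apply hpar k
      apply ih (k+1)
      rwa [show 2*(k+1+m)+1 = 2*(k+(m+1))+1 from by ring]
  apply hiter K k
  have hbig : psum (transpose e) (2*(k+K)+1) = size (transpose e) := by
    apply psum_eq_size hTp K hK
    omega
  rw [hbig, size_transpose he.1]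
  exact he.2.1

lemma eq_of_dom_dom {x y : ℕ → ℕ} (h1 : Dom x y) (h2 : Dom y x) : x = y := by
  funext i
  have ha := le_antisymm (h1.2 (i+1)) (h2.2 (i+1))
  have hb := le_antisymm (h1.2 i) (h2.2 i)
  have := psum_succ x i
  have := psum_succ y i
  omega

lemma collapse_eq {T : (ℕ → ℕ) → Prop} {t c : ℕ → ℕ} (h : IsCollapse T t c) :
    collapse T t = c := by
  rw [collapse, dif_pos ⟨c, h⟩]
  have h' := Exists.choose_spec (⟨c, h⟩ : ∃ c, IsCollapse T t c)
  exact eq_of_dom_dom (h.2.2 _ h'.1 h'.2.1) (h'.2.2 _ h.1 h.2.1)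

/-- a pair that gets changed by the D-collapse -/
def chg (t : ℕ → ℕ) (j : ℕ) : Prop :=
  Even (t (2*j)) ∧ Even (t (2*j+1)) ∧ t (2*j+1) < t (2*j)

instance (t : ℕ → ℕ) : DecidablePred (chg t) := fun j => by unfold chg; infer_instance

/-- the explicit D-collapse of a partition with even-parity pairs -/
def pairFix (t : ℕ → ℕ) : ℕ → ℕ := fun i =>
  if chg t (i/2) then (if i % 2 = 0 then t i - 1 else t i + 1) else t i

variable {t : ℕ → ℕ}

lemma pairFix_even (t : ℕ → ℕ) (j : ℕ) :
    pairFix t (2*j) = if chg t j then t (2*j) - 1 else t (2*j) := by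
  have h1 : (2*j)/2 = j := by omega
  have h2 : (2*j) % 2 = 0 := by omega
  simp [pairFix, h1, h2]

lemma pairFix_odd (t : ℕ → ℕ) (j : ℕ) :
    pairFix t (2*j+1) = if chg t j then t (2*j+1) + 1 else t (2*j+1) := by
  have h1 : (2*j+1)/2 = j := by omega
  have h2 : (2*j+1) % 2 = 1 := by omega
  simp [pairFix, h1, h2]

lemma chg_ge {j : ℕ} (h : chg t j) : t (2*j+1) + 2 ≤ t (2*j) := by
  obtain ⟨⟨x, hx⟩, ⟨y, hy⟩, hlt⟩ := h
  omega

lemma pairFix_le (t : ℕ → ℕ) (j : ℕ) : pairFix t (2*j) ≤ t (2*j) := by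
  rw [pairFix_even]; split <;> omega

lemma pairFix_pair_sum (t : ℕ → ℕ) (j : ℕ) :
    pairFix t (2*j) + pairFix t (2*j+1) = t (2*j) + t (2*j+1) := by
  rw [pairFix_even, pairFix_odd]
  by_cases h : chg t j
  · have := chg_ge h
    simp [h]; omega
  · simp [h]

lemma pairFix_zero (ht : IsPartition t) (N : ℕ) (hN : ∀ i, N ≤ i → t i = 0) :
    ∀ i, N+1 ≤ i → pairFix t i = 0 := by
  intro i hi
  obtain ⟨j, hj⟩ : ∃ j, i = 2*j ∨ i = 2*j+1 := ⟨i/2, by omega⟩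
  rcases hj with rfl | rfl
  · rw [pairFix_even]
    have := hN (2*j) (by omega)
    split <;> omega
  · rw [pairFix_odd]
    have ha : t (2*j) = 0 := hN (2*j) (by omega)
    have hb : t (2*j+1) = 0 := by
      have := ht.1 (show 2*j ≤ 2*j+1 by omega); omega
    have h : ¬ chg t j := fun hc => by have := chg_ge hc; omega
    simp [h, hb]

lemma pairFix_isPartition (ht : IsPartition t) : IsPartition (pairFix t) := by
  constructor
  · apply antitone_nat_of_succ_le
    intro i
    obtain ⟨j, hj⟩ : ∃ j, i = 2*j ∨ i = 2*j+1 := ⟨i/2, by omega⟩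
    rcases hj with rfl | rfl
    · rw [pairFix_even, pairFix_odd]
      by_cases h : chg t j
      · have := chg_ge h
        simp [h]; omega
      · simp [h]
        exact ht.1 (by omega)
    · have h1 : 2*j+1+1 = 2*(j+1) := by ring
      rw [h1, pairFix_odd]
      have h2 : pairFix t (2*(j+1)) ≤ t (2*(j+1)) := pairFix_le t (j+1)
      have h3 : t (2*(j+1)) ≤ t (2*j+1) := ht.1 (by omega)
      split <;> omega
  · obtain ⟨N, hN⟩ := ht.2
    exact ⟨N+1, pairFix_zero ht N hN⟩

lemma sum_pairs (g : ℕ → ℕ) (K : ℕ) :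
    ∑ i ∈ Finset.range (2*K), g i = ∑ j ∈ Finset.range K, (g (2*j) + g (2*j+1)) := by
  induction K with
  | zero => simp
  | succ K ih =>
    have h1 : 2*(K+1) = 2*K + 1 + 1 := by ring
    rw [h1, Finset.sum_range_succ, Finset.sum_range_succ, ih, Finset.sum_range_succ]
    omega

lemma psum_pairFix_even (t : ℕ → ℕ) (k : ℕ) : psum (pairFix t) (2*k) = psum t (2*k) := by
  rw [psum, psum, sum_pairs, sum_pairs]
  exact Finset.sum_congr rfl (fun j _ => pairFix_pair_sum t j)

lemma psum_pairFix_odd (t : ℕ → ℕ) (k : ℕ) :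
    psum (pairFix t) (2*k+1) = psum t (2*k) + pairFix t (2*k) := by
  rw [psum_succ, psum_pairFix_even]

lemma size_pairFix (ht : IsPartition t) : size (pairFix t) = size t := by
  obtain ⟨N, hN⟩ := ht.2
  have hc : ∀ i, 2*(N+1) ≤ i → pairFix t i = 0 :=
    fun i hi => pairFix_zero ht N hN i (by omega)
  have hts : ∀ i, 2*(N+1) ≤ i → t i = 0 := fun i hi => hN i (by omega)
  rw [size_eq_psum (2*(N+1)) hc, size_eq_psum (2*(N+1)) hts]
  exact psum_pairFix_even t (N+1)

variable {t : ℕ → ℕ}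

lemma pairFix_pair_iff (ht : IsPartition t) (hpp : ∀ j, Even (t (2*j) + t (2*j+1)))
    {p : ℕ} (hp : 0 < p) (hpe : Even p) (j : ℕ) :
    pairFix t (2*j) = p ↔ pairFix t (2*j+1) = p := by
  rw [pairFix_even, pairFix_odd]
  have hba : t (2*j+1) ≤ t (2*j) := ht.1 (by omega)
  have hs := hpp j
  rw [Nat.even_add] at hs
  simp only [Nat.even_iff] at hs hpe
  by_cases h : chg t j
  · have h' := h
    simp only [chg, Nat.even_iff] at h'
    simp only [if_pos h]
    omega
  · have h' := h
    simp only [chg, Nat.even_iff, not_and_or, not_lt] at h'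
    simp only [if_neg h]
    omega

lemma mult_pairFix_even (ht : IsPartition t) (hpp : ∀ j, Even (t (2*j) + t (2*j+1)))
    (p : ℕ) (hp : 0 < p) (hpe : Even p) : Even (mult (pairFix t) p) := by
  classical
  set c := pairFix t with hc
  set T : Set ℕ := {j | c (2*j) = p} with hT
  have hiff := pairFix_pair_iff ht hpp hp hpe
  have hS : {i | c i = p} = (fun j => 2*j) '' T ∪ (fun j => 2*j+1) '' T := by
    ext i
    simp only [Set.mem_union, Set.mem_image, Set.mem_setOf_eq, hT]
    obtain ⟨j, hj⟩ : ∃ j, i = 2*j ∨ i = 2*j+1 := ⟨i/2, by omega⟩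
    rcases hj with rfl | rfl
    · constructor
      · intro h; exact Or.inl ⟨j, h, rfl⟩
      · rintro (⟨j', hj', he⟩ | ⟨j', hj', he⟩)
        · have : j' = j := by omega
          subst this; exact hj'
        · omega
    · constructor
      · intro h; exact Or.inr ⟨j, (hiff j).2 h, rfl⟩
      · rintro (⟨j', hj', he⟩ | ⟨j', hj', he⟩)
        · omega
        · have hj2 : j' = j := by omega
          rw [hj2] at hj'; exact (hiff j).1 hj'
  have hTfin : T.Finite := by
    obtain ⟨N, hN⟩ := ht.2
    apply Set.Finite.subset (Set.finite_Iio (N+1))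
    intro j hj
    simp only [hT, Set.mem_setOf_eq] at hj
    simp only [Set.mem_Iio]
    by_contra hcon
    push_neg at hcon
    have := pairFix_zero ht N hN (2*j) (by omega)
    rw [← hc] at this
    omega
  have hinj1 : Function.Injective (fun j : ℕ => 2*j) := fun a b h => by
    simp only [] at h; omega
  have hinj2 : Function.Injective (fun j : ℕ => 2*j+1) := fun a b h => by
    simp only [] at h; omega
  have hdisj : Disjoint ((fun j : ℕ => 2*j) '' T) ((fun j : ℕ => 2*j+1) '' T) := by
    rw [Set.disjoint_left]
    rintro i ⟨j1, _, h1⟩ ⟨j2, _, h2⟩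
    simp only [] at h1 h2
    omega
  rw [mult, hS, Set.ncard_union_eq hdisj (hTfin.image _) (hTfin.image _),
    Set.ncard_image_of_injective T hinj1, Set.ncard_image_of_injective T hinj2]
  exact ⟨T.ncard, rfl⟩

lemma mult_transpose_pairFix_odd (ht : IsPartition t) (hpp : ∀ j, Even (t (2*j) + t (2*j+1)))
    (p : ℕ) (hpo : Odd p) : Even (mult (transpose (pairFix t)) p) := by
  have hc := pairFix_isPartition ht
  obtain ⟨j, hj⟩ := hpo
  subst hj
  have h1 := mult_add_transpose (transpose_isPartition hc) (2*j+1) (by omega)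
  rw [transpose_transpose hc] at h1
  have hp1 : 2*j+1 - 1 = 2*j := by omega
  rw [hp1] at h1
  have hpair : Even (pairFix t (2*j) + pairFix t (2*j+1)) := by
    rw [pairFix_pair_sum]; exact hpp j
  have hba : pairFix t (2*j+1) ≤ pairFix t (2*j) := hc.1 (by omega)
  obtain ⟨s, hs⟩ := hpair
  exact ⟨s - pairFix t (2*j+1), by omega⟩

lemma transpose_flat (ht : IsPartition t) {j v : ℕ} (h1 : t (2*j+1) ≤ v) (h2 : v < t (2*j)) :
    transpose t v = 2*j+1 := by
  rw [transpose]
  have hset : {i | v < t i} = Set.Iio (2*j+1) := by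
    ext i
    simp only [Set.mem_setOf_eq, Set.mem_Iio]
    constructor
    · intro hi; by_contra hcon; push_neg at hcon
      have : t i ≤ t (2*j+1) := ht.1 hcon
      omega
    · intro hi
      have : t (2*j) ≤ t i := ht.1 (by omega)
      omega
  rw [hset, ← Finset.coe_range, Set.ncard_coe_finset, Finset.card_range]

lemma transpose_big (ht : IsPartition t) {j v : ℕ} (h2 : v < t (2*j+1)) :
    2*j+2 ≤ transpose t v := by
  rw [transpose]
  have hsub : Set.Iio (2*j+2) ⊆ {i | v < t i} := by
    intro i hi
    simp only [Set.mem_Iio] at hi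
    have : t (2*j+1) ≤ t i := ht.1 (by omega)
    simp only [Set.mem_setOf_eq]; omega
  calc 2*j+2 = (Set.Iio (2*j+2) : Set ℕ).ncard := by
        rw [← Finset.coe_range, Set.ncard_coe_finset, Finset.card_range]
    _ ≤ _ := Set.ncard_le_ncard hsub (setOf_finite ht v)

lemma psum_flat_aux (ht : IsPartition t) (j : ℕ) :
    ∀ m, t (2*j+1) + m ≤ t (2*j) →
      psum (transpose t) (t (2*j+1) + m) = psum (transpose t) (t (2*j+1)) + m * (2*j+1) := by
  intro m
  induction m with
  | zero => simp
  | succ m ih =>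
    intro hm
    have h1 := ih (by omega)
    have h2 : transpose t (t (2*j+1) + m) = 2*j+1 := transpose_flat ht (by omega) (by omega)
    rw [show t (2*j+1) + (m+1) = (t (2*j+1) + m) + 1 by ring, psum_succ, h1, h2]
    ring

lemma psum_flat (ht : IsPartition t) (j w : ℕ) (h1 : t (2*j+1) ≤ w) (h2 : w ≤ t (2*j)) :
    psum (transpose t) w
      = psum (transpose t) (t (2*j+1)) + (w - t (2*j+1)) * (2*j+1) := by
  have := psum_flat_aux ht j (w - t (2*j+1)) (by omega)
  rwa [show t (2*j+1) + (w - t (2*j+1)) = w by omega] at this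

lemma pairFix_greatest (ht : IsPartition t) (hdC : IsTypeC (transpose t))
    (e : ℕ → ℕ) (he : IsTypeD e) (hdom : Dom e t) : Dom e (pairFix t) := by
  have hc : IsPartition (pairFix t) := pairFix_isPartition ht
  obtain ⟨N, hN⟩ := ht.2
  have hsize_ct : size (pairFix t) = size t := size_pairFix ht
  have hsize_e : size e = size t := hdom.1
  have hdomT : ∀ w, psum (transpose t) w ≤ psum (transpose e) w :=
    fun w => domT he.1 ht hsize_e hdom.2 w
  have hEodd : ∀ w, w % 2 = 1 → Even (psum (transpose e) w) := by
    intro w hw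
    have := typeD_psumT_odd_even he ((w-1)/2)
    rwa [show 2*((w-1)/2)+1 = w by omega] at this
  -- the key strict bound inside a changed pair
  have hkeyOdd : ∀ j w, chg t j → t (2*j+1) < w → w < t (2*j) → w % 2 = 1 →
      psum (transpose t) w + 1 ≤ psum (transpose e) w := by
    intro j w hchg hbw haw hwodd
    obtain ⟨hax, hby, hlt⟩ := hchg
    have hflatw := psum_flat ht j w (by omega) (by omega)
    have hcorner : Even (psum (transpose t) (t (2*j+1))) := by
      rcases Nat.eq_zero_or_pos (t (2*j+1)) with h0 | h0
      · rw [h0]; simp [psum]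
      · apply corner_even hdC
        right
        have hdb : transpose t (t (2*j+1)) = 2*j+1 := transpose_flat ht le_rfl hlt
        have hdb1 : 2*j+2 ≤ transpose t (t (2*j+1) - 1) := transpose_big ht (by omega)
        omega
    have hprod : Odd ((w - t (2*j+1)) * (2*j+1)) := by
      apply Odd.mul
      · obtain ⟨y, hy⟩ := hby
        exact ⟨(w - t (2*j+1) - 1)/2, by omega⟩
      · exact ⟨j, by ring⟩
    have hle := hdomT w
    obtain ⟨r, hr⟩ := hEodd w hwodd
    obtain ⟨s, hs⟩ := hcorner
    obtain ⟨u, hu⟩ := hprod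
    omega
  have hkey : ∀ j w, chg t j → t (2*j+1) < w → w < t (2*j) →
      psum (transpose t) w + 1 ≤ psum (transpose e) w := by
    intro j w hchg hbw haw
    rcases Nat.even_or_odd w with hwe | hwo
    · -- w even; use w-1 and w+1
      obtain ⟨hax, hby, hlt⟩ := hchg
      obtain ⟨x, hx⟩ := hax
      obtain ⟨y, hy⟩ := hby
      obtain ⟨z, hz⟩ := hwe
      have hw1 : t (2*j+1) < w - 1 ∧ w - 1 < t (2*j) := by omega
      have hw2 : t (2*j+1) < w + 1 ∧ w + 1 < t (2*j) := by omega
      have h1 := hkeyOdd j (w-1) ⟨⟨x, hx⟩, ⟨y, hy⟩, hlt⟩ hw1.1 hw1.2 (by omega)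
      have h2 := hkeyOdd j (w+1) ⟨⟨x, hx⟩, ⟨y, hy⟩, hlt⟩ hw2.1 hw2.2 (by omega)
      -- concavity of psum (transpose e) and flatness of transpose t
      have hTe := transpose_isPartition he.1
      have hp1 : psum (transpose e) (w+1) = psum (transpose e) w + transpose e w := psum_succ _ w
      have hp2 : psum (transpose e) w = psum (transpose e) (w-1) + transpose e (w-1) := by
        have := psum_succ (transpose e) (w-1)
        rwa [show w - 1 + 1 = w by omega] at this
      have hmono : transpose e w ≤ transpose e (w-1) := hTe.1 (by omega)
      have hq1 : psum (transpose t) (w+1) = psum (transpose t) w + transpose t w := psum_succ _ w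
      have hq2 : psum (transpose t) w = psum (transpose t) (w-1) + transpose t (w-1) := by
        have := psum_succ (transpose t) (w-1)
        rwa [show w - 1 + 1 = w by omega] at this
      have hf1 : transpose t w = 2*j+1 := transpose_flat ht (by omega) (by omega)
      have hf2 : transpose t (w-1) = 2*j+1 := transpose_flat ht (by omega) (by omega)
      omega
    · exact hkeyOdd j w hchg hbw haw (by obtain ⟨u, hu⟩ := hwo; omega)
  -- core inequality on transposed partial sums
  have hcore : ∀ w, psum (transpose (pairFix t)) w ≤ psum (transpose e) w := by
    intro w
    have hcz : ∀ i, 2*(N+1) ≤ i → pairFix t i = 0 :=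
      fun i hi => pairFix_zero ht N hN i (by omega)
    have htz : ∀ i, 2*(N+1) ≤ i → t i = 0 := fun i hi => hN i (by omega)
    have h1 : psum (transpose (pairFix t)) w
        = ∑ j ∈ Finset.range (N+1), (min (pairFix t (2*j)) w + min (pairFix t (2*j+1)) w) := by
      rw [psum_transpose_eq hc (2*(N+1)) hcz w, sum_pairs]
    have h2 : psum (transpose t) w
        = ∑ j ∈ Finset.range (N+1), (min (t (2*j)) w + min (t (2*j+1)) w) := by
      rw [psum_transpose_eq ht (2*(N+1)) htz w, sum_pairs]
    set P : ℕ → Prop := fun j => chg t j ∧ t (2*j+1) < w ∧ w < t (2*j) with hP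
    have hPdec : DecidablePred P := fun j => by rw [hP]; infer_instance
    have hpair : ∀ j, min (pairFix t (2*j)) w + min (pairFix t (2*j+1)) w
        ≤ min (t (2*j)) w + min (t (2*j+1)) w + (if P j then 1 else 0) := by
      intro j
      rw [pairFix_even, pairFix_odd]
      by_cases hch : chg t j
      · have hge : t (2*j+1) + 2 ≤ t (2*j) := by
          obtain ⟨⟨x, hx⟩, ⟨y, hy⟩, hlt⟩ := hch
          omega
        simp only [if_pos hch, hP]
        by_cases hin : t (2*j+1) < w ∧ w < t (2*j)
        · rw [if_pos ⟨hch, hin⟩]; omega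
        · rw [if_neg (fun hcon => hin hcon.2)]; omega
      · simp only [if_neg hch, hP]
        rw [if_neg (fun hcon => hch hcon.1)]
        omega
    by_cases hex : ∃ j, P j
    · obtain ⟨j0, hj0⟩ := hex
      have huniq : ∀ j, P j → j = j0 := by
        intro j hj
        by_contra hne
        rcases Nat.lt_or_ge j j0 with hlt | hge
        · have : t (2*j0) ≤ t (2*j+1) := ht.1 (by omega)
          rcases hj with ⟨_, h1, h2⟩
          rcases hj0 with ⟨_, h3, h4⟩
          omega
        · have hgt : j0 < j := by omega
          have : t (2*j) ≤ t (2*j0+1) := ht.1 (by omega)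
          rcases hj with ⟨_, h1, h2⟩
          rcases hj0 with ⟨_, h3, h4⟩
          omega
      have hsum_ind : ∑ j ∈ Finset.range (N+1), (if P j then 1 else 0) ≤ 1 := by
        rw [← Finset.card_filter]
        apply Finset.card_le_one.mpr
        intro a ha b hb
        rw [huniq a (Finset.mem_filter.1 ha).2, huniq b (Finset.mem_filter.1 hb).2]
      have hstep : psum (transpose (pairFix t)) w
          ≤ psum (transpose t) w + ∑ j ∈ Finset.range (N+1), (if P j then 1 else 0) := by
        rw [h1, h2, ← Finset.sum_add_distrib]
        exact Finset.sum_le_sum (fun j _ => hpair j)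
      have hbound := hkey j0 w hj0.1 hj0.2.1 hj0.2.2
      omega
    · push_neg at hex
      have hstep : psum (transpose (pairFix t)) w ≤ psum (transpose t) w := by
        rw [h1, h2]
        apply Finset.sum_le_sum
        intro j _
        have := hpair j
        rwa [if_neg (hex j), add_zero] at this
      exact le_trans hstep (hdomT w)
  constructor
  · rw [hsize_e, hsize_ct]
  · intro k
    have hfinal := domT (transpose_isPartition hc) (transpose_isPartition he.1)
      (by rw [size_transpose hc, size_transpose he.1, hsize_ct, hsize_e]) hcore k
    rwa [transpose_transpose he.1, transpose_transpose hc] at hfinal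

end Stmt0

open Stmt0 in
/-- For every type-C partition `d` of size `2n`, the D-collapse of
the transpose `dᵗ` is a special type-D partition of size `2n`; in particular
`d̃_LS` is well-defined from type-C partitions of size `2n` to special type-D
partitions of size `2n`. -/
theorem stmt_0 (n : ℕ) (d : ℕ → ℕ) (hd : IsTypeC d) (hsize : size d = 2 * n) :
    IsTypeD (mLS d) ∧ IsTypeC (transpose (mLS d)) ∧ size (mLS d) = 2 * n := by
  have hdp : IsPartition d := hd.1
  have ht : IsPartition (transpose d) := Stmt0.transpose_isPartition hdp
  have hdC : IsTypeC (transpose (transpose d)) := by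
    rw [Stmt0.transpose_transpose hdp]; exact hd
  have hpp : ∀ j, Even (transpose d (2*j) + transpose d (2*j+1)) := Stmt0.pair_parity hd
  have hsize_t : size (transpose d) = 2*n := by rw [Stmt0.size_transpose hdp, hsize]
  have hsct : size (pairFix (transpose d)) = 2*n := by rw [Stmt0.size_pairFix ht, hsize_t]
  have hcP : IsPartition (pairFix (transpose d)) := Stmt0.pairFix_isPartition ht
  have hcD : IsTypeD (pairFix (transpose d)) :=
    ⟨hcP, by rw [hsct]; exact ⟨n, by ring⟩,
      fun p hp hpe => Stmt0.mult_pairFix_even ht hpp p hp hpe⟩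
  have hdomct : Dom (pairFix (transpose d)) (transpose d) := by
    constructor
    · exact Stmt0.size_pairFix ht
    · intro k
      obtain ⟨j, hj⟩ : ∃ j, k = 2*j ∨ k = 2*j+1 := ⟨k/2, by omega⟩
      rcases hj with rfl | rfl
      · rw [Stmt0.psum_pairFix_even]
      · rw [Stmt0.psum_pairFix_odd, Stmt0.psum_succ]
        have := Stmt0.pairFix_le (transpose d) j
        omega
  have hcol : IsCollapse IsTypeD (transpose d) (pairFix (transpose d)) :=
    ⟨hcD, hdomct, fun e heD hedom => Stmt0.pairFix_greatest ht hdC e heD hedom⟩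
  have hmls : mLS d = pairFix (transpose d) := Stmt0.collapse_eq hcol
  rw [hmls]
  refine ⟨hcD, ?_, hsct⟩
  refine ⟨Stmt0.transpose_isPartition hcP, ?_,
    fun p hpo => Stmt0.mult_transpose_pairFix_odd ht hpp p hpo⟩
  rw [Stmt0.size_transpose hcP, hsct]
  exact ⟨n, by ring⟩
end

section
/- For every special type-D partition e of size 2n (n ≥ 0) there exists a type-C partition d of size 2n such that the D-collapse of d^t equals e; that is, the map d̃_LS : {type-C partitions of size 2n} → {special type-D partitions of size 2n}, d ↦ D-collapse of d^t, is surjective. -/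
lemma my_ncard_Iio (n : ℕ) : (Set.Iio n).ncard = n := by
  rw [show Set.Iio n = ↑(Finset.range n) by ext; simp, Set.ncard_coe_finset, Finset.card_range]

lemma my_lower_finite_eq (S : Set ℕ) (hfin : S.Finite)
    (hlow : ∀ a b, a ≤ b → b ∈ S → a ∈ S) : ∀ j, j ∈ S ↔ j < S.ncard := by
  intro j
  constructor
  · intro hj
    have hsub : Set.Iio (j + 1) ⊆ S := by
      intro a ha
      exact hlow a j (Nat.lt_succ_iff.mp ha) hj
    have := Set.ncard_le_ncard hsub hfin
    rw [my_ncard_Iio] at this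
    omega
  · intro hj
    by_contra hjS
    have hsub : S ⊆ ↑(Finset.range j) := by
      intro b hb
      simp only [Finset.coe_range, Set.mem_Iio]
      by_contra hbj
      exact hjS (hlow j b (le_of_not_gt hbj) hb)
    have := Set.ncard_le_ncard hsub (Finset.range j).finite_toSet
    simp only [Set.ncard_coe_finset, Finset.card_range] at this
    omega

lemma transpose_key {f : ℕ → ℕ} (hf : IsPartition f) (i j : ℕ) :
    i < f j ↔ j < transpose f i := by
  obtain ⟨hanti, N, hN⟩ := hf
  have hfin : {j | i < f j}.Finite := by
    apply Set.Finite.subset (Set.finite_Iio N)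
    intro a ha
    simp only [Set.mem_setOf_eq] at ha
    simp only [Set.mem_Iio]
    by_contra h
    push_neg at h
    rw [hN a h] at ha
    omega
  have hlow : ∀ a b, a ≤ b → b ∈ {j | i < f j} → a ∈ {j | i < f j} := fun a b hab hb =>
    lt_of_lt_of_le hb (hanti hab)
  exact my_lower_finite_eq _ hfin hlow j

lemma transpose_transpose_eq {f : ℕ → ℕ} (hf : IsPartition f) :
    transpose (transpose f) = f := by
  funext i
  have h : {j | i < transpose f j} = Set.Iio (f i) := by
    ext j
    simp only [Set.mem_setOf_eq, Set.mem_Iio]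
    exact (transpose_key hf j i).symm
  rw [transpose]
  simp only [h, my_ncard_Iio]

lemma my_size_eq_sum {f : ℕ → ℕ} {N : ℕ} (hN : ∀ i, N ≤ i → f i = 0) :
    size f = ∑ i ∈ Finset.range N, f i := by
  apply tsum_eq_sum
  intro b hb
  exact hN b (by simpa using hb)

lemma size_transpose {f : ℕ → ℕ} (hf : IsPartition f) : size (transpose f) = size f := by
  obtain ⟨hanti, N, hN⟩ := hf
  have ht0 : ∀ i, f 0 ≤ i → transpose f i = 0 := by
    intro i hi
    have hempty : {j | i < f j} = ∅ := Set.eq_empty_of_forall_notMem fun j hj =>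
      absurd hj (not_lt.mpr (le_trans (hanti (Nat.zero_le j)) hi))
    simp [transpose, hempty]
  rw [my_size_eq_sum ht0, my_size_eq_sum hN]
  have hterm : ∀ i, transpose f i = ∑ j ∈ Finset.range N, if i < f j then 1 else 0 := by
    intro i
    rw [transpose]
    rw [show {j | i < f j} = ↑((Finset.range N).filter (fun j => i < f j)) by
      ext j
      simp only [Finset.coe_filter, Finset.mem_range, Set.mem_setOf_eq, iff_and_self]
      intro h
      by_contra hb
      push_neg at hb
      rw [hN j hb] at h
      omega]
    rw [Set.ncard_coe_finset, Finset.card_filter]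
  simp_rw [hterm]
  rw [Finset.sum_comm]
  apply Finset.sum_congr rfl
  intro j _
  have hfj : f j ≤ f 0 := hanti (Nat.zero_le j)
  rw [← Finset.card_filter]
  have hfil : (Finset.range (f 0)).filter (fun i => i < f j) = Finset.range (f j) := by
    ext i
    simp only [Finset.mem_filter, Finset.mem_range]
    omega
  rw [hfil, Finset.card_range]

lemma my_psum_ext {f g : ℕ → ℕ} (h : ∀ k, psum f k = psum g k) : f = g := by
  funext k
  have h1 := h k
  have h2 := h (k + 1)
  simp only [psum, Finset.sum_range_succ] at h1 h2
  omega

lemma collapse_self {T : (ℕ → ℕ) → Prop} {d : ℕ → ℕ} (hT : T d) : collapse T d = d := by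
  have hc : IsCollapse T d d := ⟨hT, ⟨rfl, fun k => le_refl _⟩, fun e _ hDe => hDe⟩
  have hex : ∃ c, IsCollapse T d c := ⟨d, hc⟩
  rw [collapse, dif_pos hex]
  obtain ⟨_, ⟨_, hp⟩, hmax⟩ := hex.choose_spec
  have h2 := hmax d hT ⟨rfl, fun k => le_refl _⟩
  exact my_psum_ext fun k => le_antisymm (hp k) (h2.2 k)

/-- every special type-D partition of size `2n` is the D-collapse
of `dᵗ` for some type-C partition `d` of size `2n`; i.e. `d̃_LS` is surjective
onto the special type-D partitions of size `2n`. -/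
theorem stmt_1 (n : ℕ) (e : ℕ → ℕ) (he : IsTypeD e) (hesp : IsTypeC (transpose e))
    (hsize : size e = 2 * n) :
    ∃ d : ℕ → ℕ, IsTypeC d ∧ size d = 2 * n ∧ mLS d = e := by
  refine ⟨transpose e, hesp, ?_, ?_⟩
  · rw [size_transpose he.1, hsize]
  · rw [mLS, collapseD, transpose_transpose_eq he.1, collapse_self he]
end

section
/- The map d̃_SP(e) := C-collapse of (e^+)^- from special type-D partitions of size 2n to metaplectic special partitions of size 2n is order preserving: if e ≼ e' in the dominance order, then d̃_SP(e) ≼ d̃_SP(e'). -/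
/-!
The map `e ↦ (e⁺)⁻` is monotone for the dominance order: for `k > 0` its `k`-th partial sum is
`min (psum e k + 1) (size e)`. The C-collapse is monotone wherever it exists, since it is the
greatest type C partition below its argument. It exists for every partition `d` of even size:
if `d` is not of type C, a suitable box can be moved down so that only partial sums of `d` that
are odd and do not separate two equal odd parts drop. A type C partition has no partial sums of
this kind, so every type C partition below `d` stays below the new one; induct on
`∑ k, psum d k`.
-/

section

open Finset Filter

variable {f g d e e' : ℕ → ℕ}

theorem psum_zero (f : ℕ → ℕ) : psum f 0 = 0 := rfl

theorem psum_succ (f : ℕ → ℕ) (k : ℕ) : psum f (k + 1) = psum f k + f k :=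
  sum_range_succ f k

theorem psum_mono (f : ℕ → ℕ) : Monotone (psum f) := fun _ _ h =>
  sum_le_sum_of_subset (range_subset_range.mpr h)

theorem psum_add_mul_of_const {a b p : ℕ} (hab : a ≤ b) (h : ∀ i, a ≤ i → i < b → f i = p) :
    psum f b = psum f a + (b - a) * p := by
  rw [psum, psum, range_eq_Ico, range_eq_Ico, ← sum_Ico_consecutive _ (Nat.zero_le a) hab,
    sum_congr rfl fun i hi => h i (mem_Ico.mp hi).1 (mem_Ico.mp hi).2, sum_const, Nat.card_Ico,
    smul_eq_mul]

theorem size_eq_psum {N : ℕ} (hN : ∀ i, N ≤ i → f i = 0) : size f = psum f N :=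
  tsum_eq_sum fun i hi => hN i (by simpa using hi)

theorem psum_eventually_eq_size (hf : ∃ N, ∀ i, N ≤ i → f i = 0) :
    ∀ᶠ k in atTop, psum f k = size f := by
  obtain ⟨N, hN⟩ := hf
  filter_upwards [eventually_ge_atTop N] with k hk
  exact (size_eq_psum fun i hi => hN i (hk.trans hi)).symm

theorem IsPartition.psum_le_size (hf : IsPartition f) (k : ℕ) : psum f k ≤ size f := by
  obtain ⟨N, hN, hkN⟩ := ((psum_eventually_eq_size hf.2).and (eventually_ge_atTop k)).exists
  exact hN ▸ psum_mono f hkN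

theorem IsPartition.lt_size_of_pos (hf : IsPartition f) {a : ℕ} (ha : 0 < f a) : a < size f :=
  calc a < ∑ _i ∈ range (a + 1), 1 := by simp
    _ ≤ psum f (a + 1) := sum_le_sum fun i hi => ha.trans_le (hf.1 (mem_range_succ_iff.mp hi))
    _ ≤ size f := hf.psum_le_size _

theorem Dom.refl (f : ℕ → ℕ) : Dom f f := ⟨rfl, fun _ => le_rfl⟩

theorem Dom.trans (h₁ : Dom f g) (h₂ : Dom g d) : Dom f d :=
  ⟨h₁.1.trans h₂.1, fun k => (h₁.2 k).trans (h₂.2 k)⟩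

/-- For a partition, `firstLE f v` is the number of parts larger than `v`. -/
noncomputable def firstLE (f : ℕ → ℕ) (v : ℕ) : ℕ := sInf {i | f i ≤ v}

theorem IsPartition.apply_firstLE_le (hf : IsPartition f) (v : ℕ) : f (firstLE f v) ≤ v := by
  obtain ⟨N, hN⟩ := hf.2
  exact Nat.sInf_mem (s := {i | f i ≤ v}) ⟨N, by simp [hN N le_rfl]⟩

theorem firstLE_le_of_apply_le {v i : ℕ} (h : f i ≤ v) : firstLE f v ≤ i := Nat.sInf_le h

theorem lt_apply_of_lt_firstLE {v i : ℕ} (h : i < firstLE f v) : v < f i :=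
  lt_of_not_ge fun hi => (firstLE_le_of_apply_le hi).not_gt h

theorem IsPartition.apply_le_of_firstLE_le (hf : IsPartition f) {v i : ℕ} (h : firstLE f v ≤ i) :
    f i ≤ v :=
  (hf.1 h).trans (hf.apply_firstLE_le v)

theorem IsPartition.firstLE_antitone (hf : IsPartition f) : Antitone (firstLE f) := fun _ _ h =>
  firstLE_le_of_apply_le ((hf.apply_firstLE_le _).trans h)

theorem IsPartition.mult_eq (hf : IsPartition f) {p : ℕ} (hp : 0 < p) :
    mult f p = firstLE f (p - 1) - firstLE f p := by
  have hset : {i | f i = p} = Set.Ico (firstLE f p) (firstLE f (p - 1)) := by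
    ext i
    simp only [Set.mem_ofPred_eq, Set.mem_Ico]
    refine ⟨fun h => ⟨firstLE_le_of_apply_le h.le, lt_of_not_ge fun hi => ?_⟩, fun ⟨h₁, h₂⟩ => ?_⟩
    · have := hf.apply_le_of_firstLE_le hi
      omega
    · have := hf.apply_le_of_firstLE_le h₁
      have := lt_apply_of_lt_firstLE h₂
      omega
  rw [mult, hset, ← coe_Ico, Set.ncard_coe_finset, Nat.card_Ico]

theorem IsPartition.numParts_eq (hf : IsPartition f) : numParts f = firstLE f 0 := by
  have hset : {j | 0 < f j} = Set.Iio (firstLE f 0) := by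
    ext j
    simp only [Set.mem_ofPred_eq, Set.mem_Iio]
    refine ⟨fun h => lt_of_not_ge fun hj => ?_, lt_apply_of_lt_firstLE⟩
    have := hf.apply_le_of_firstLE_le hj
    omega
  rw [numParts, hset, ← coe_range, Set.ncard_coe_finset, card_range]

theorem IsPartition.size_eq_psum_firstLE_zero (hf : IsPartition f) :
    size f = psum f (firstLE f 0) :=
  size_eq_psum fun _ hi => Nat.le_zero.mp (hf.apply_le_of_firstLE_le hi)

theorem IsPartition.even_psum_firstLE (hf : IsPartition f) (v : ℕ)
    (hodd : ∀ q, v < q → Odd q → Even (mult f q)) : Even (psum f (firstLE f v)) := by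
  obtain ⟨k, hk⟩ : ∃ k, f 0 ≤ v + k := ⟨f 0, by omega⟩
  induction k generalizing v with
  | zero =>
    rw [Nat.le_zero.mp (firstLE_le_of_apply_le (by omega : f 0 ≤ v)), psum_zero]
    exact ⟨0, rfl⟩
  | succ k ih =>
    have hstep : psum f (firstLE f v) =
        psum f (firstLE f (v + 1)) + (firstLE f v - firstLE f (v + 1)) * (v + 1) :=
      psum_add_mul_of_const (hf.firstLE_antitone (Nat.le_succ v)) fun i hi₁ hi₂ => by
        have := hf.apply_le_of_firstLE_le hi₁
        have := lt_apply_of_lt_firstLE hi₂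
        omega
    rw [hstep]
    refine (ih (v + 1) (fun q hq => hodd q (by omega)) (by omega)).add ?_
    rcases Nat.even_or_odd (v + 1) with hv | hv
    · exact hv.mul_left _
    · have hm := hodd (v + 1) (by omega) hv
      rw [hf.mult_eq (Nat.succ_pos v), Nat.succ_sub_one] at hm
      exact hm.mul_right _

theorem IsPartition.eq_and_odd_of_odd_psum (hf : IsPartition f)
    (hC : ∀ q, Odd q → Even (mult f q)) {k : ℕ} (hodd : Odd (psum f (k + 1))) :
    f k = f (k + 1) ∧ Odd (f (k + 1)) := by
  set p := f k
  have hpos : 0 < p := by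
    by_contra hp
    have hk : firstLE f 0 ≤ k := firstLE_le_of_apply_le (by omega)
    have := psum_add_mul_of_const (hk.trans k.le_succ) fun i hi _ =>
      Nat.le_zero.mp (hf.apply_le_of_firstLE_le hi)
    rw [this, mul_zero, add_zero, ← Nat.not_even_iff_odd] at hodd
    exact hodd (hf.even_psum_firstLE 0 fun q _ => hC q)
  have ha : firstLE f p ≤ k := firstLE_le_of_apply_le le_rfl
  have hkb : k < firstLE f (p - 1) := lt_of_not_ge fun h => by
    have := hf.apply_le_of_firstLE_le h
    omega
  have hsum : psum f (k + 1) = psum f (firstLE f p) + (k + 1 - firstLE f p) * p :=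
    psum_add_mul_of_const (by omega) fun i hi₁ hi₂ => by
      have := hf.apply_le_of_firstLE_le hi₁
      have : f k ≤ f i := hf.1 (by omega)
      omega
  have hprod : Odd ((k + 1 - firstLE f p) * p) := by
    rw [hsum] at hodd
    exact (Nat.odd_add'.mp hodd).mpr (hf.even_psum_firstLE p fun q _ => hC q)
  obtain ⟨hcount, hp⟩ := Nat.odd_mul.mp hprod
  have hmult := hC p hp
  rw [hf.mult_eq hpos] at hmult
  have hkb' : k + 1 < firstLE f (p - 1) := by
    refine lt_of_le_of_ne hkb fun h => ?_
    rw [← h] at hmult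
    exact Nat.not_even_iff_odd.mpr hcount hmult
  have := lt_apply_of_lt_firstLE hkb'
  have : f (k + 1) ≤ f k := hf.1 k.le_succ
  exact ⟨by omega, by rwa [show f (k + 1) = p by omega]⟩

theorem IsTypeC.psum_lt_of_dom (he : IsTypeC e) (hd : IsPartition d) (hdom : Dom e d) {k : ℕ}
    (hodd : Odd (psum d (k + 1))) (hsplit : ¬(d k = d (k + 1) ∧ Odd (d (k + 1)))) :
    psum e (k + 1) < psum d (k + 1) := by
  refine lt_of_le_of_ne (hdom.2 _) fun heq => hsplit ?_
  obtain ⟨hek, hodd'⟩ := he.1.eq_and_odd_of_odd_psum he.2.2 (heq ▸ hodd)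
  have h₁ : psum e k + e k = psum d k + d k := by rw [← psum_succ, ← psum_succ, heq]
  have h₂ : psum e (k + 1) + e (k + 1) ≤ psum d (k + 1) + d (k + 1) := by
    rw [← psum_succ, ← psum_succ]
    exact hdom.2 (k + 2)
  have h₃ := hdom.2 k
  have h₄ : d (k + 1) ≤ d k := hd.1 k.le_succ
  have hdk : d (k + 1) = e (k + 1) := by omega
  exact ⟨by omega, hdk ▸ hodd'⟩

def moveBox (d : ℕ → ℕ) (a b : ℕ) : ℕ → ℕ :=
  fun i => if i = a then d i - 1 else if i = b then d i + 1 else d i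

theorem psum_moveBox {a b : ℕ} (hab : a < b) (ha : 0 < d a) (k : ℕ) :
    psum (moveBox d a b) k + (if a < k ∧ k ≤ b then 1 else 0) = psum d k := by
  induction k with
  | zero => simp [psum_zero]
  | succ k ih =>
    rw [psum_succ, psum_succ, moveBox]
    by_cases hka : k = a
    · subst hka; split_ifs at ih ⊢ <;> omega
    · split_ifs at ih ⊢ <;> omega

theorem moveBox_apply_of_lt {a b i : ℕ} (hab : a < b) (hi : b < i) : moveBox d a b i = d i := by
  simp only [moveBox, if_neg (show i ≠ a by omega), if_neg (show i ≠ b by omega)]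

theorem isPartition_moveBox (hd : IsPartition d) {a b : ℕ} (hab : a < b) (ha : d (a + 1) < d a)
    (hb : d b < d (b - 1)) (hab' : d b + 2 ≤ d a) : IsPartition (moveBox d a b) := by
  refine ⟨antitone_nat_of_succ_le fun i => ?_, ?_⟩
  · have hi : d (i + 1) ≤ d i := hd.1 i.le_succ
    simp only [moveBox]
    split_ifs <;> subst_vars <;> (try simp only [Nat.add_sub_cancel] at hb) <;> omega
  · obtain ⟨N, hN⟩ := hd.2
    refine ⟨max N (b + 1), fun i hi => ?_⟩
    rw [moveBox_apply_of_lt hab (by omega)]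
    exact hN i (by omega)

theorem dom_moveBox_self (hd : IsPartition d) {a b : ℕ} (hab : a < b) (ha : 0 < d a) :
    Dom (moveBox d a b) d := by
  have hsupp : ∃ N, ∀ i, N ≤ i → moveBox d a b i = 0 := by
    obtain ⟨N, hN⟩ := hd.2
    refine ⟨max N (b + 1), fun i hi => ?_⟩
    rw [moveBox_apply_of_lt hab (by omega)]
    exact hN i (by omega)
  refine ⟨?_, fun k => by have := psum_moveBox hab ha k; omega⟩
  obtain ⟨k, hk', hk, hbk⟩ :=
    ((psum_eventually_eq_size hsupp).and ((psum_eventually_eq_size hd.2).and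
      (eventually_gt_atTop b))).exists
  have := psum_moveBox hab ha k
  rw [if_neg (by omega)] at this
  omega

theorem IsTypeC.dom_moveBox (he : IsTypeC e) (hd : IsPartition d) (hed : Dom e d) {a b : ℕ}
    (hab : a < b) (ha : 0 < d a)
    (hsplit : ∀ k, a ≤ k → k < b → Odd (psum d (k + 1)) ∧ ¬(d k = d (k + 1) ∧ Odd (d (k + 1)))) :
    Dom e (moveBox d a b) := by
  refine ⟨hed.1.trans (dom_moveBox_self hd hab ha).1.symm, fun k => ?_⟩
  have hk := psum_moveBox hab ha k
  split_ifs at hk with hk'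
  · obtain ⟨k, rfl⟩ : ∃ k', k = k' + 1 := ⟨k - 1, by omega⟩
    obtain ⟨hodd, hne⟩ := hsplit k (by omega) (by omega)
    have := he.psum_lt_of_dom hd hed hodd hne
    omega
  · have := hed.2 k
    omega

theorem IsPartition.exists_greatest_odd_mult (hd : IsPartition d) (hC : ¬IsTypeC d)
    (hev : Even (size d)) :
    ∃ p, Odd p ∧ Odd (mult d p) ∧ ∀ q, p < q → Odd q → Even (mult d q) := by
  set S := {p | Odd p ∧ Odd (mult d p)}
  have hne : S.Nonempty := by
    simp only [IsTypeC, not_and, not_forall, Nat.not_even_iff_odd] at hC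
    obtain ⟨p, hp, hm⟩ := hC hd hev
    exact ⟨p, hp, hm⟩
  have hbdd : BddAbove S := ⟨d 0, fun p ⟨_, hp⟩ => by
    obtain ⟨i, hi⟩ := Set.nonempty_of_ncard_ne_zero (s := {i | d i = p}) (by
      rintro h
      rw [mult, h] at hp
      exact Nat.not_odd_zero hp)
    exact (hi : d i = p) ▸ hd.1 (Nat.zero_le i)⟩
  refine ⟨sSup S, (Nat.sSup_mem hne hbdd).1, (Nat.sSup_mem hne hbdd).2, fun q hq hoq => ?_⟩
  by_contra hq'
  exact hq.not_ge (le_csSup hbdd ⟨hoq, Nat.not_even_iff_odd.mp hq'⟩)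

/-- `a` is the last row of length `p`, the greatest odd part of odd multiplicity, and `b` the
first row of length `< p - 1`. -/
theorem IsPartition.exists_lowering (hd : IsPartition d) (hC : ¬IsTypeC d) (hev : Even (size d)) :
    ∃ a b, a < b ∧ d (a + 1) < d a ∧ d b < d (b - 1) ∧ d b + 2 ≤ d a ∧
      ∀ k, a ≤ k → k < b → Odd (psum d (k + 1)) ∧ ¬(d k = d (k + 1) ∧ Odd (d (k + 1))) := by
  obtain ⟨p, hp, hpm, hmax⟩ := hd.exists_greatest_odd_mult hC hev
  have hp0 : 0 < p := hp.pos
  set a := firstLE d p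
  set m := firstLE d (p - 1)
  set j := firstLE d (p - 2)
  rw [hd.mult_eq hp0] at hpm
  have ham : a < m := by
    obtain ⟨r, hr⟩ := hpm
    omega
  have hmj : m ≤ j := hd.firstLE_antitone (by omega)
  have hdm : d (m - 1) = p := by
    have := hd.apply_le_of_firstLE_le (show a ≤ m - 1 by omega)
    have := lt_apply_of_lt_firstLE (show m - 1 < m by omega)
    omega
  have hodd_m : Odd (psum d m) := by
    rw [psum_add_mul_of_const (p := p) ham.le fun i hi₁ hi₂ => by
      have := hd.apply_le_of_firstLE_le hi₁
      have := lt_apply_of_lt_firstLE hi₂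
      omega]
    exact (hd.even_psum_firstLE p hmax).add_odd (hpm.mul hp)
  have hp3 : 3 ≤ p := by
    by_contra hp3
    obtain rfl : p = 1 := by obtain ⟨r, hr⟩ := hp; omega
    rw [hd.size_eq_psum_firstLE_zero] at hev
    exact Nat.not_even_iff_odd.mpr hodd_m hev
  have hmid : ∀ i, m ≤ i → i < j → d i = p - 1 := fun i hi₁ hi₂ => by
    have := hd.apply_le_of_firstLE_le hi₁
    have := lt_apply_of_lt_firstLE hi₂
    omega
  have hdj : d j ≤ p - 2 := hd.apply_firstLE_le _
  have hdj' : p - 2 < d (j - 1) := lt_apply_of_lt_firstLE (by omega)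
  refine ⟨m - 1, j, by omega, ?_, by omega, by omega, fun k hk₁ hk₂ => ⟨?_, ?_⟩⟩
  · rw [Nat.sub_add_cancel (by omega), hdm]
    have := hd.apply_le_of_firstLE_le (le_refl m)
    omega
  · rw [psum_add_mul_of_const (show m ≤ k + 1 by omega) fun i hi₁ hi₂ => hmid i hi₁ (by omega)]
    exact hodd_m.add_even ((Nat.Odd.sub_odd hp odd_one).mul_left _)
  · rintro ⟨hk, hodd⟩
    rcases Nat.lt_or_ge (k + 1) j with hkj | hkj
    · rw [hmid (k + 1) (by omega) hkj] at hodd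
      exact Nat.not_even_iff_odd.mpr hodd (Nat.Odd.sub_odd hp odd_one)
    · obtain rfl : k = j - 1 := by omega
      rw [Nat.sub_add_cancel (by omega)] at hk
      omega

theorem exists_isCollapse_typeC (hd : IsPartition d) (hev : Even (size d)) :
    ∃ c, IsCollapse IsTypeC d c := by
  induction hΦ : ∑ k ∈ range (size d + 1), psum d k using Nat.strong_induction_on generalizing d
    with | _ t ih =>
  by_cases hC : IsTypeC d
  · exact ⟨d, hC, Dom.refl d, fun e _ h => h⟩
  obtain ⟨a, b, hab, ha, hb, hab', hsplit⟩ := hd.exists_lowering hC hev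
  have hpos : 0 < d a := by omega
  have hdom := dom_moveBox_self hd hab hpos
  have hlt : ∑ k ∈ range (size (moveBox d a b) + 1), psum (moveBox d a b) k < t := by
    rw [hdom.1, ← hΦ]
    refine sum_lt_sum (fun k _ => hdom.2 k) ⟨a + 1, mem_range.mpr ?_, ?_⟩
    · have := hd.lt_size_of_pos hpos
      omega
    · have := psum_moveBox hab hpos (a + 1)
      rw [if_pos ⟨a.lt_succ_self, hab⟩] at this
      omega
  obtain ⟨c, hcC, hcd, hcmax⟩ :=
    ih _ hlt (isPartition_moveBox hd hab ha hb hab') (hdom.1 ▸ hev) rfl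
  exact ⟨c, hcC, hcd.trans hdom, fun e he hed => hcmax e he (he.dom_moveBox hd hed hab hpos hsplit)⟩

theorem isPartition_boxPlus (he : IsPartition e) : IsPartition (boxPlus e) := by
  refine ⟨antitone_nat_of_succ_le fun i => ?_, ?_⟩
  · rcases i with _ | i
    · simpa [boxPlus] using (he.1 (Nat.zero_le 1)).trans (Nat.le_succ _)
    · simpa [boxPlus] using he.1 (Nat.le_succ (i + 1))
  · obtain ⟨N, hN⟩ := he.2
    exact ⟨N + 1, fun i hi => by simp [boxPlus, show i ≠ 0 by omega, hN i (by omega)]⟩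

theorem psum_succ_boxPlus (e : ℕ → ℕ) (k : ℕ) :
    psum (boxPlus e) (k + 1) = psum e (k + 1) + 1 := by
  induction k with
  | zero => simp [psum_succ, psum_zero, boxPlus]
  | succ k ih => rw [psum_succ, ih, psum_succ e (k + 1), boxPlus, if_neg k.succ_ne_zero]; ring

theorem size_boxPlus (he : IsPartition e) : size (boxPlus e) = size e + 1 := by
  obtain ⟨N, hN⟩ := eventually_atTop.mp ((psum_eventually_eq_size (isPartition_boxPlus he).2).and
    (psum_eventually_eq_size he.2))
  obtain ⟨h₁, h₂⟩ := hN (N + 1) N.le_succ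
  rw [← h₁, ← h₂, psum_succ_boxPlus]

theorem dom_boxPlus (he : IsPartition e) (he' : IsPartition e') (h : Dom e e') :
    Dom (boxPlus e) (boxPlus e') := by
  refine ⟨by rw [size_boxPlus he, size_boxPlus he', h.1], fun k => ?_⟩
  rcases k with _ | k
  · rfl
  · rw [psum_succ_boxPlus, psum_succ_boxPlus]
    exact Nat.add_le_add_right (h.2 _) 1

theorem isPartition_boxMinus (hg : IsPartition g) : IsPartition (boxMinus g) := by
  refine ⟨antitone_nat_of_succ_le fun i => ?_, ?_⟩
  · have : g (i + 1) ≤ g i := hg.1 (by omega)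
    have hlast : i = numParts g - 1 → g (i + 1) = 0 := fun h =>
      Nat.le_zero.mp (hg.apply_le_of_firstLE_le (by rw [← hg.numParts_eq]; omega))
    simp only [boxMinus]
    split_ifs <;> omega
  · obtain ⟨N, hN⟩ := hg.2
    exact ⟨N, fun i hi => by simp [boxMinus, hN i hi]⟩

theorem psum_boxMinus (hg : IsPartition g) (hg0 : 0 < g 0) (k : ℕ) :
    psum (boxMinus g) k = min (psum g k) (size g - 1) := by
  have hm : firstLE g 0 ≠ 0 := fun h => by
    have := hg.apply_firstLE_le 0
    rw [h] at this
    omega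
  obtain ⟨a, ha⟩ := Nat.exists_eq_succ_of_ne_zero hm
  have hbm : ∀ i, boxMinus g i = if i = a then g i - 1 else g i := fun i => by
    simp [boxMinus, hg.numParts_eq, ha]
  have hga : 0 < g a := lt_apply_of_lt_firstLE (by omega)
  have hstep : psum (boxMinus g) k + (if a < k then 1 else 0) = psum g k := by
    induction k with
    | zero => simp [psum_zero]
    | succ k ih =>
      rw [psum_succ, psum_succ, hbm]
      by_cases hka : k = a
      · subst hka; split_ifs at ih ⊢ <;> omega
      · split_ifs at ih ⊢ <;> omega
  split_ifs at hstep with hak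
  · have : psum g k = size g := (size_eq_psum fun i hi =>
      Nat.le_zero.mp (hg.apply_le_of_firstLE_le (by omega))).symm
    omega
  · have : psum g k + g a ≤ size g := by
      calc psum g k + g a ≤ psum g k + g k := Nat.add_le_add_left (hg.1 (by omega)) _
        _ = psum g (k + 1) := (psum_succ g k).symm
        _ ≤ size g := hg.psum_le_size _
    omega

theorem size_boxMinus (hg : IsPartition g) (hg0 : 0 < g 0) :
    size (boxMinus g) = size g - 1 := by
  obtain ⟨k, h₁, h₂⟩ := ((psum_eventually_eq_size (isPartition_boxMinus hg).2).and
    (psum_eventually_eq_size hg.2)).exists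
  rw [← h₁, psum_boxMinus hg hg0, h₂]
  omega

theorem dom_boxMinus (hg : IsPartition g) (hd : IsPartition d) (hg0 : 0 < g 0) (hd0 : 0 < d 0)
    (h : Dom g d) : Dom (boxMinus g) (boxMinus d) := by
  refine ⟨by rw [size_boxMinus hg hg0, size_boxMinus hd hd0, h.1], fun k => ?_⟩
  rw [psum_boxMinus hg hg0, psum_boxMinus hd hd0, h.1]
  exact min_le_min_right _ (h.2 k)

theorem collapse_dom_collapse {T : (ℕ → ℕ) → Prop} {d d' : ℕ → ℕ} (h : ∃ c, IsCollapse T d c)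
    (h' : ∃ c, IsCollapse T d' c) (hdd' : Dom d d') : Dom (collapse T d) (collapse T d') := by
  have hc : IsCollapse T d (collapse T d) := by rw [collapse, dif_pos h]; exact h.choose_spec
  have hc' : IsCollapse T d' (collapse T d') := by rw [collapse, dif_pos h']; exact h'.choose_spec
  exact hc'.2.2 _ hc.1 (hc.2.1.trans hdd')

theorem boxPlus_pos (e : ℕ → ℕ) : 0 < boxPlus e 0 := by simp [boxPlus]

theorem size_boxMinus_boxPlus (he : IsPartition e) : size (boxMinus (boxPlus e)) = size e := by
  rw [size_boxMinus (isPartition_boxPlus he) (boxPlus_pos e), size_boxPlus he, Nat.add_sub_cancel]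

theorem dom_mSP (he : IsPartition e) (he' : IsPartition e') (hev : Even (size e))
    (h : Dom e e') : Dom (mSP e) (mSP e') := by
  have hcollapse {f : ℕ → ℕ} (hf : IsPartition f) (hev : Even (size f)) :
      ∃ c, IsCollapse IsTypeC (boxMinus (boxPlus f)) c :=
    exists_isCollapse_typeC (isPartition_boxMinus (isPartition_boxPlus hf))
      ((size_boxMinus_boxPlus hf).symm ▸ hev)
  exact collapse_dom_collapse (hcollapse he hev) (hcollapse he' (h.1 ▸ hev))
    (dom_boxMinus (isPartition_boxPlus he) (isPartition_boxPlus he') (boxPlus_pos e)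
      (boxPlus_pos e') (dom_boxPlus he he' h))

end

theorem stmt_5_general (e e' : ℕ → ℕ)
    (he : IsTypeD e)
    (he' : IsTypeD e')
    (hdom : Dom e e') :
    Dom (mSP e) (mSP e') :=
  dom_mSP he.1 he'.1 he.2.1 hdom

/-- the map `d̃_SP` from special type-D partitions of size `2n` to
metaplectic special partitions of size `2n` is order preserving for the
dominance order. -/
theorem stmt_5 (n : ℕ) (e e' : ℕ → ℕ)
    (he : IsTypeD e) (hesp : IsTypeC (transpose e)) (hsize : size e = 2 * n)
    (he' : IsTypeD e') (hesp' : IsTypeC (transpose e')) (hsize' : size e' = 2 * n)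
    (hdom : Dom e e') :
    Dom (mSP e) (mSP e') :=
  stmt_5_general e e' he he' hdom
end
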